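/- arXiv:0907.3254 — 2 statements merged into one kernel-verified Lean document; each statement's English description precedes it below -/
import Mathlib

section
/- Let n ≥ 0. For each k with 1 ≤ k ≤ n+1, the number of paths p in 𝒫(n,1,1) with p_1 = +1 such that exactly k up steps of p start on or below the x-axis equals (1/(n+1))·C(2n,n) (the n-th Catalan number). -/
/-!
Let `h` be the height function of the periodic extension of a word `w` of `n + 1` up and `n`
down steps, so `h (t + 2n+1) = h t + 1`. Rotating `w` to start at position `j`, the up step at
position `m` starts on or below the axis iff `(h m, -m) ≤ (h j, -j)` lexicographically (the
periodicity handles the steps that wrap around). Hence the number of such up steps is the rank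
of `j` among the up steps in this linear order, and every word has exactly one rotation that
starts with an up step and has `k` of them. So the words counted, paired with the `2n+1`
rotations, are in bijection with all `C(2n+1, n+1) = (2n+1) C(2n, n) / (n+1)` words.
-/

open Finset

/-- The sum of the first `m` entries of a sequence `p` of length `N` (the height `s_m`). -/
def psum {N : ℕ} (p : Fin N → ℤ) (m : ℕ) : ℤ :=
  ∑ j ∈ Finset.univ.filter (fun j : Fin N => (j : ℕ) < m), p j

theorem Finset.existsUnique_card_filter_le_eq {ι α : Type*} [LinearOrder α] {f : ι → α}
    (hf : Function.Injective f) (s : Finset ι) {k : ℕ} (hk1 : 1 ≤ k) (hk2 : k ≤ #s) :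
    ∃! j, j ∈ s ∧ #{m ∈ s | f m ≤ f j} = k := by
  set rank : ι → ℕ := fun j => #{m ∈ s | f m ≤ f j}
  have rank_lt : ∀ a ∈ s, ∀ b ∈ s, f a < f b → rank a < rank b := by
    intro a _ b hb hab
    refine card_lt_card ((ssubset_iff_of_subset ?_).2 ⟨b, ?_, ?_⟩)
    · intro m hm
      simp only [mem_filter] at hm ⊢
      exact ⟨hm.1, hm.2.trans hab.le⟩
    · simp [hb]
    · simp [hab]
  have rank_injOn : ∀ a ∈ s, ∀ b ∈ s, rank a = rank b → a = b := by
    intro a ha b hb h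
    rcases lt_trichotomy (f a) (f b) with hab | hab | hab
    · exact absurd h (rank_lt a ha b hb hab).ne
    · exact hf hab
    · exact absurd h (rank_lt b hb a ha hab).ne'
  obtain ⟨j, hj, hjk⟩ := surj_on_of_inj_on_of_card_le (t := Icc 1 #s) (fun j _ => rank j)
    (fun j hj => mem_Icc.2 ⟨card_pos.2 ⟨j, by simp [hj]⟩, card_filter_le _ _⟩)
    (fun a b ha hb => rank_injOn a ha b hb) (by simp) k (mem_Icc.2 ⟨hk1, hk2⟩)
  exact ⟨j, ⟨hj, hjk.symm⟩, fun i ⟨hi, hik⟩ => rank_injOn i hi j hj (hik.trans hjk)⟩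

lemma sum_eq_two_mul_card_sub_card {ι : Type*} [Fintype ι] {w : ι → ℤ}
    (hw : ∀ i, w i = 1 ∨ w i = -1) :
    ∑ i, w i = 2 * #{i | w i = 1} - Fintype.card ι := by
  have h : ∀ i, w i = 2 * (if w i = 1 then 1 else 0) - 1 := fun i => by
    rcases hw i with h | h <;> simp [h]
  rw [sum_congr rfl fun i _ => h i, sum_sub_distrib, ← mul_sum, sum_boole, sum_const,
    card_univ, nsmul_eq_mul, mul_one]

lemma card_signVectors (ι : Type*) [Fintype ι] (m : ℕ) :
    Nat.card {w : ι → ℤ // (∀ i, w i = 1 ∨ w i = -1) ∧ #{i | w i = 1} = m} =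
      (Fintype.card ι).choose m := by
  classical
  let e : {w : ι → ℤ // (∀ i, w i = 1 ∨ w i = -1) ∧ #{i | w i = 1} = m} ≃
      {s : Finset ι // #s = m} :=
    { toFun := fun w => ⟨({i | w.1 i = 1} : Finset ι), w.2.2⟩
      invFun := fun s => ⟨fun i => if i ∈ s.1 then 1 else -1,
        fun i => by by_cases h : i ∈ s.1 <;> simp [h],
        by convert s.2; ext i; by_cases h : i ∈ s.1 <;> simp [h]⟩
      left_inv := fun w => Subtype.ext <| funext fun i => by
        rcases w.2.1 i with h | h <;> simp [h]
      right_inv := fun s => Subtype.ext <| by ext i; by_cases h : i ∈ s.1 <;> simp [h] }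
  rw [Nat.card_congr e, Nat.card_eq_fintype_card, Fintype.card_finset_len]

namespace ChungFeller

open Fin.NatCast

variable {N : ℕ} [NeZero N] {α : Type*}

lemma psum_eq_sum_range (w : Fin N → ℤ) {m : ℕ} (hm : m ≤ N) :
    psum w m = ∑ t ∈ range m, w t := by
  calc psum w m = ∑ i : Fin N, if (i : ℕ) < m then w i else 0 := sum_filter _ _
    _ = ∑ t ∈ range N, if t < m then w t else 0 := by
      simpa using Fin.sum_univ_eq_sum_range (fun t => if t < m then w t else 0) N
    _ = ∑ t ∈ range m, w t := by
      rw [← sum_filter]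
      congr 1
      ext t
      simp only [mem_filter, mem_range]
      omega

-- `t : ℕ` is read modulo `N`: this is the height of the periodic extension of `w`.
def height (w : Fin N → ℤ) (a : ℕ) : ℤ := ∑ t ∈ range a, w t

lemma height_self_add (w : Fin N → ℤ) (a : ℕ) : height w (N + a) = ∑ i, w i + height w a := by
  unfold height
  rw [sum_range_add, ← Fin.sum_univ_eq_sum_range (fun t => w t)]
  simp only [Fin.cast_val_eq_self, Nat.cast_add, Fin.natCast_self, zero_add]

def rotate (j : Fin N) (w : Fin N → α) : Fin N → α := fun i => w (i + j)

lemma rotate_rotate (a b : Fin N) (w : Fin N → α) :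
    rotate a (rotate b w) = rotate (a + b) w := by
  funext i
  simp only [rotate, add_assoc]

lemma rotate_neg_rotate (j : Fin N) (w : Fin N → α) : rotate (-j) (rotate j w) = w := by
  rw [rotate_rotate, neg_add_cancel]
  funext i
  simp only [rotate, add_zero]

lemma card_filter_rotate (P : α → Prop) [DecidablePred P] (j : Fin N) (w : Fin N → α) :
    #{i | P (rotate j w i)} = #{i | P (w i)} :=
  card_equiv (Equiv.addRight j) fun i => by simp only [mem_filter, mem_univ, true_and]; rfl

lemma psum_rotate (w : Fin N → ℤ) (j i : Fin N) :
    psum (rotate j w) i = height w (j + i) - height w j := by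
  rw [psum_eq_sum_range _ i.isLt.le, height, height, sum_range_add_sub_sum_range]
  refine sum_congr rfl fun t _ => ?_
  simp only [rotate, Nat.cast_add, Fin.cast_val_eq_self, add_comm]

def key (w : Fin N → ℤ) (m : Fin N) : ℤ ×ₗ (Fin N)ᵒᵈ := toLex (height w m, OrderDual.toDual m)

lemma key_injective (w : Fin N → ℤ) : Function.Injective (key w) := fun a b h => by
  simpa [key] using congrArg (fun x => (ofLex x).2) h

lemma key_le_key_iff {w : Fin N → ℤ} {a b : Fin N} :
    key w a ≤ key w b ↔ height w a < height w b ∨ height w a = height w b ∧ b ≤ a := by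
  simp [key, Prod.Lex.toLex_le_toLex]

lemma psum_rotate_nonpos_iff {w : Fin N → ℤ} (hw : ∑ i, w i = 1) (j i : Fin N) :
    psum (rotate j w) i ≤ 0 ↔ key w (i + j) ≤ key w j := by
  rw [psum_rotate, key_le_key_iff, sub_nonpos, Fin.le_iff_val_le_val]
  have hval := Fin.val_add_eq_ite i j
  split_ifs at hval with hwrap
  · rw [show (j : ℕ) + i = N + (i + j : Fin N) by omega, height_self_add, hw]
    constructor
    · intro h; left; linarith
    · rintro (h | ⟨-, h⟩)
      · linarith
      · omega
  · rw [show (j : ℕ) + i = (i + j : Fin N) by omega, le_iff_lt_or_eq]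
    constructor
    · rintro (h | h)
      · exact .inl h
      · exact .inr ⟨h, by omega⟩
    · rintro (h | ⟨h, -⟩)
      · exact .inl h
      · exact .inr h

def lowUpSteps (p : Fin N → ℤ) : ℕ := #{i | p i = 1 ∧ psum p i ≤ 0}

lemma lowUpSteps_rotate {w : Fin N → ℤ} (hw : ∑ i, w i = 1) (j : Fin N) :
    lowUpSteps (rotate j w) = #{m ∈ {i | w i = 1} | key w m ≤ key w j} :=
  card_equiv (Equiv.addRight j) fun i => by
    simp only [mem_filter, mem_univ, true_and]
    exact and_congr Iff.rfl (psum_rotate_nonpos_iff hw j i)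

lemma existsUnique_lowUpSteps_rotate_eq {w : Fin N → ℤ} (hw : ∑ i, w i = 1) {k : ℕ}
    (hk1 : 1 ≤ k) (hk2 : k ≤ #{i | w i = 1}) :
    ∃! j, w j = 1 ∧ lowUpSteps (rotate j w) = k := by
  refine (existsUnique_congr fun j => ?_).1
    (existsUnique_card_filter_le_eq (key_injective w) _ hk1 hk2)
  rw [lowUpSteps_rotate hw, mem_filter]
  simp only [mem_univ, true_and]

theorem card_lowUpSteps_eq_mul (A : (Fin N → ℤ) → Prop) {k : ℕ}
    (hA : ∀ j w, A w → A (rotate j w)) (hsum : ∀ w, A w → ∑ i, w i = 1)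
    (hk : ∀ w, A w → 1 ≤ k ∧ k ≤ #{i | w i = 1}) :
    Nat.card {p // A p ∧ p 0 = 1 ∧ lowUpSteps p = k} * N = Nat.card {w // A w} := by
  have huniq : ∀ w, A w → ∃! j, w j = 1 ∧ lowUpSteps (rotate j w) = k := fun w hw =>
    existsUnique_lowUpSteps_rotate_eq (hsum w hw) (hk w hw).1 (hk w hw).2
  have hundo : ∀ (p : Fin N → ℤ) (j : Fin N), p 0 = 1 → lowUpSteps p = k →
      rotate j p (-j) = 1 ∧ lowUpSteps (rotate (-j) (rotate j p)) = k := fun p j hp0 hpk => by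
    rw [rotate_neg_rotate, rotate, neg_add_cancel]
    exact ⟨hp0, hpk⟩
  let f : {p // A p ∧ p 0 = 1 ∧ lowUpSteps p = k} × Fin N → {w // A w} :=
    fun pj => ⟨rotate pj.2 pj.1, hA _ _ pj.1.2.1⟩
  have hf : Function.Bijective f := by
    constructor
    · rintro ⟨⟨p, hp, hp0, hpk⟩, j⟩ ⟨⟨q, hq, hq0, hqk⟩, j'⟩ h
      have hw : rotate j p = rotate j' q := congrArg Subtype.val h
      have hj : -j = -j' := (huniq _ (hA j p hp)).unique (hundo p j hp0 hpk)
        (hw ▸ hundo q j' hq0 hqk)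
      obtain rfl : j = j' := neg_injective hj
      obtain rfl : p = q := by rw [← rotate_neg_rotate j p, hw, rotate_neg_rotate]
      rfl
    · rintro ⟨w, hw⟩
      obtain ⟨j, ⟨hj1, hjk⟩, -⟩ := huniq w hw
      refine ⟨(⟨rotate j w, hA j w hw, by rwa [rotate, zero_add], hjk⟩, -j), ?_⟩
      exact Subtype.ext (rotate_neg_rotate j w)
  rw [← Nat.card_congr (Equiv.ofBijective f hf), Nat.card_prod, Nat.card_fin]

end ChungFeller

/-- Among paths in 𝒫(n,1,1) (steps ±1, with n+1 up steps and n down steps) starting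
with an up step, for each `1 ≤ k ≤ n+1` the number with exactly `k` up steps
starting on or below the x-axis is `(1/(n+1))·C(2n,n)`. -/
theorem catalan_chung_feller_up (n k : ℕ) (hk1 : 1 ≤ k) (hk2 : k ≤ n + 1) :
    Nat.card {p : Fin (2*n+1) → ℤ //
      (∀ i, p i = 1 ∨ p i = -1) ∧
      (univ.filter (fun i => p i = 1)).card = n + 1 ∧
      p ⟨0, Nat.succ_pos _⟩ = 1 ∧
      (univ.filter (fun i : Fin (2*n+1) => p i = 1 ∧ psum p (i : ℕ) ≤ 0)).card = k }
      * (n + 1) = Nat.choose (2*n) n := by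
  let A : (Fin (2*n+1) → ℤ) → Prop := fun w =>
    (∀ i, w i = 1 ∨ w i = -1) ∧ #{i | w i = 1} = n + 1
  have hcycle := ChungFeller.card_lowUpSteps_eq_mul A (k := k)
    (fun j w hw => ⟨fun i => hw.1 _, (ChungFeller.card_filter_rotate (· = 1) j w).trans hw.2⟩)
    (fun w hw => by
      rw [sum_eq_two_mul_card_sub_card hw.1, hw.2, Fintype.card_fin]
      push_cast
      ring)
    (fun w hw => ⟨hk1, hw.2 ▸ hk2⟩)
  rw [card_signVectors, Fintype.card_fin] at hcycle
  calc _ = Nat.card {p // A p ∧ p 0 = 1 ∧ ChungFeller.lowUpSteps p = k} * (n + 1) := by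
        congr 1
        exact Nat.card_congr (Equiv.subtypeEquivRight fun p => and_assoc.symm)
    _ = Nat.choose (2*n) n := by
      refine Nat.eq_of_mul_eq_mul_left (by positivity : 0 < 2*n+1) ?_
      rw [Nat.add_one_mul_choose_eq, ← hcycle]
      ring
end

section
/- Let n ≥ 0. For each i with 1 ≤ i ≤ 2n+1, the number of paths p in 𝒫(n,1,1) whose left-most highest vertex is at position i (that is, i is the smallest index m with 0 ≤ m ≤ 2n+1 such that s_m = max{s_0, s_1, …, s_{2n+1}}) equals (1/(2n+1))·C(2n+1,n); in particular this count is independent of i. -/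
/-!
Cycle lemma. Extend a path periodically; since its total rise is 1 and heights are integers,
`i ∈ [1, N]` is the left-most highest vertex exactly when `S t ≤ S i` on the window
`[i, i + N)`. That window condition is equivariant under cyclic rotation and invariant under
`i ↦ i + N`, so rotation carries the paths with left-most maximum at `i` bijectively onto those
with left-most maximum at any other `j`. The `N` classes have equal size and partition all
`C(N, n + 1)` paths.
-/

open Finset

open Fin.NatCast

section Rotation

variable {N : ℕ} [NeZero N]

-- The cast `ℕ → Fin N` reduces mod `N`: these are the heights of the periodic extension of `p`.
def height (p : Fin N → ℤ) (t : ℕ) : ℤ := ∑ u ∈ range t, p (u : Fin N)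

lemma psum_eq_height (p : Fin N → ℤ) {m : ℕ} (hm : m ≤ N) : psum p m = height p m := by
  have h := Fin.sum_univ_eq_sum_range (fun u => if u < m then p (u : Fin N) else 0) N
  simp only [Fin.cast_val_eq_self, ← sum_filter] at h
  rw [psum, h, height, range_eq_Ico, Ico_filter_lt, min_eq_right hm, ← range_eq_Ico]

lemma height_period_add (p : Fin N → ℤ) (t : ℕ) :
    height p (N + t) = height p N + height p t := by
  simp [height, sum_range_add]

def rotate (c : Fin N) : (Fin N → ℤ) ≃ (Fin N → ℤ) where
  toFun p m := p (m + c)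
  invFun p m := p (m - c)
  left_inv p := by simp
  right_inv p := by simp

lemma height_rotate (p : Fin N → ℤ) (k t : ℕ) :
    height (rotate (k : Fin N) p) t = height p (k + t) - height p k := by
  simp [height, sum_range_add, rotate, add_comm]

lemma rotate_symm (c : Fin N) : (rotate c).symm = rotate (-c) := by
  ext p m
  simp [rotate, sub_eq_add_neg]

lemma height_period_add_of_eq_one {p : Fin N → ℤ} (hp : height p N = 1) (t : ℕ) :
    height p (N + t) = height p t + 1 := by
  rw [height_period_add, hp, add_comm]

end Rotation

section LeftmostMax

variable {S T : ℕ → ℤ} {N i : ℕ}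

def IsLeftmostMax (S : ℕ → ℤ) (N i : ℕ) : Prop :=
  (∀ m ≤ N, S m ≤ S i) ∧ ∀ m < i, S m < S i

lemma isLeftmostMax_congr (h : ∀ m ≤ N, S m = T m) (hi : i ≤ N) :
    IsLeftmostMax S N i ↔ IsLeftmostMax T N i :=
  and_congr (forall₂_congr fun m hm => by rw [h m hm, h i hi])
    (forall₂_congr fun m hm => by rw [h m (by omega), h i hi])

lemma IsLeftmostMax.pos (h : IsLeftmostMax S N i) (hS : S 0 < S N) : 0 < i := by
  by_contra! hi
  obtain rfl : i = 0 := by omega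
  exact (h.1 N le_rfl).not_gt hS

lemma existsUnique_isLeftmostMax (hS : S 0 < S N) :
    ∃! i, i ∈ Icc 1 N ∧ IsLeftmostMax S N i := by
  classical
  have hmax : ∃ i, i ≤ N ∧ ∀ m ≤ N, S m ≤ S i := by
    obtain ⟨i, hi, himax⟩ := (range (N + 1)).exists_max_image S ⟨0, by simp⟩
    exact ⟨i, by simpa [Nat.lt_succ_iff] using hi,
      fun m hm => himax m (by simpa [Nat.lt_succ_iff] using hm)⟩
  obtain ⟨hiN, himax⟩ := Nat.find_spec hmax
  have hleft : IsLeftmostMax S N (Nat.find hmax) := by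
    refine ⟨himax, fun m hm => (himax m (by omega)).lt_of_ne fun heq => ?_⟩
    exact Nat.find_min hmax hm ⟨by omega, fun k hk => heq ▸ himax k hk⟩
  refine ⟨Nat.find hmax, ⟨mem_Icc.2 ⟨hleft.pos hS, hiN⟩, hleft⟩, ?_⟩
  rintro j ⟨hj, hjleft⟩
  have hjN := (mem_Icc.1 hj).2
  by_contra hne
  rcases Nat.lt_or_gt_of_ne hne with hlt | hlt
  · exact (hjleft.1 _ hiN).not_gt (hleft.2 j hlt)
  · exact (hleft.1 j hjN).not_gt (hjleft.2 _ hlt)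

def IsWindowMax (S : ℕ → ℤ) (N i : ℕ) : Prop := ∀ t ∈ Ico i (i + N), S t ≤ S i

lemma isLeftmostMax_iff_isWindowMax (hS : ∀ t, S (N + t) = S t + 1) (hi : 0 < i) (hiN : i ≤ N) :
    IsLeftmostMax S N i ↔ IsWindowMax S N i := by
  constructor
  · rintro ⟨hmax, hlt⟩ t ht
    rw [mem_Ico] at ht
    by_cases htN : t ≤ N
    · exact hmax t htN
    · obtain ⟨u, rfl⟩ := Nat.exists_eq_add_of_le (le_of_not_ge htN)
      have := hlt u (by omega)
      rw [hS]; omega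
  · intro hwin
    refine ⟨fun m hm => ?_, fun m hm => ?_⟩
    · by_cases hmi : i ≤ m
      · exact hwin m (mem_Ico.2 ⟨hmi, by omega⟩)
      · have := hwin (N + m) (mem_Ico.2 ⟨by omega, by omega⟩)
        rw [hS] at this; omega
    · have := hwin (N + m) (mem_Ico.2 ⟨by omega, by omega⟩)
      rw [hS] at this; omega

lemma isWindowMax_period_add (hS : ∀ t, S (N + t) = S t + 1) :
    IsWindowMax S N (N + i) ↔ IsWindowMax S N i := by
  constructor
  · intro h t ht
    have := h (N + t) (by simp only [mem_Ico] at ht ⊢; omega)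
    rwa [hS, hS, add_le_add_iff_right] at this
  · intro h t ht
    obtain ⟨u, rfl⟩ := Nat.exists_eq_add_of_le ((Nat.le_add_right N i).trans (mem_Ico.1 ht).1)
    rw [hS, hS, add_le_add_iff_right]
    exact h u (by simp only [mem_Ico] at ht ⊢; omega)

lemma isWindowMax_shift (k j : ℕ) :
    IsWindowMax (fun t => S (k + t) - S k) N j ↔ IsWindowMax S N (k + j) := by
  constructor
  · intro h t ht
    obtain ⟨u, rfl⟩ := Nat.exists_eq_add_of_le ((Nat.le_add_right k j).trans (mem_Ico.1 ht).1)
    simpa using h u (by simp only [mem_Ico] at ht ⊢; omega)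
  · intro h t ht
    simpa using h (k + t) (by simp only [mem_Ico] at ht ⊢; omega)

end LeftmostMax

section CycleLemma

variable {N : ℕ} [NeZero N]

lemma isLeftmostMax_height_rotate_iff {p : Fin N → ℤ} (hp : height p N = 1) {i j : ℕ}
    (hi : i ∈ Icc 1 N) (hj : j ∈ Icc 1 N) :
    IsLeftmostMax (height (rotate ((i + N - j : ℕ) : Fin N) p)) N j ↔
      IsLeftmostMax (height p) N i := by
  rw [mem_Icc] at hi hj
  -- `k + j = N + i`, so rotating by `k` moves position `i` to position `j`.
  set k := i + N - j
  have hrot : height (rotate (k : Fin N) p) N = 1 := by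
    rw [height_rotate, add_comm, height_period_add_of_eq_one hp, add_sub_cancel_left]
  rw [isLeftmostMax_iff_isWindowMax (height_period_add_of_eq_one hrot) hj.1 hj.2,
    isLeftmostMax_iff_isWindowMax (height_period_add_of_eq_one hp) hi.1 hi.2,
    funext (height_rotate p k), isWindowMax_shift, show k + j = N + i by omega,
    isWindowMax_period_add (height_period_add_of_eq_one hp)]

open scoped Classical in
theorem card_eq_mul_card_filter_isLeftmostMax (s : Finset (Fin N → ℤ))
    (hrot : ∀ p ∈ s, ∀ c, rotate c p ∈ s) (hs : ∀ p ∈ s, height p N = 1) {i : ℕ}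
    (hi : i ∈ Icc 1 N) :
    #s = N * #{p ∈ s | IsLeftmostMax (height p) N i} := by
  have hfiber : ∀ j ∈ Icc 1 N,
      #{p ∈ s | IsLeftmostMax (height p) N j} = #{p ∈ s | IsLeftmostMax (height p) N i} := by
    intro j hj
    set c : Fin N := ((i + N - j : ℕ) : Fin N)
    refine (card_equiv (rotate c) fun p => ?_).symm
    have hmem : rotate c p ∈ s ↔ p ∈ s := by
      refine ⟨fun h => ?_, fun hp => hrot p hp c⟩
      simpa [← rotate_symm] using hrot _ h (-c)
    rw [mem_filter, mem_filter, hmem]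
    exact and_congr_right fun hp => (isLeftmostMax_height_rotate_iff (hs p hp) hi hj).symm
  have hunique : ∀ p ∈ s, #{j ∈ Icc 1 N | IsLeftmostMax (height p) N j} = 1 := by
    intro p hp
    rw [card_eq_one_iff_existsUnique]
    have hpos : height p 0 < height p N := by rw [hs p hp]; simp [height]
    simpa [mem_filter] using existsUnique_isLeftmostMax hpos
  simpa using card_mul_eq_card_mul (fun p j => IsLeftmostMax (height p) N j) hunique hfiber

end CycleLemma

section Paths

variable {N K : ℕ}

def signVector (U : Finset (Fin N)) : Fin N → ℤ := fun m => if m ∈ U then 1 else -1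

variable (N K) in
def paths : Finset (Fin N → ℤ) := (powersetCard K univ).image signVector

lemma mem_paths {p : Fin N → ℤ} :
    p ∈ paths N K ↔ (∀ m, p m = 1 ∨ p m = -1) ∧ #{m | p m = 1} = K := by
  constructor
  · intro hp
    simp only [paths, mem_image, mem_powersetCard] at hp
    obtain ⟨U, ⟨-, hU⟩, rfl⟩ := hp
    refine ⟨fun m => by by_cases h : m ∈ U <;> simp [signVector, h], ?_⟩
    rw [← hU]
    congr 1
    ext m
    by_cases h : m ∈ U <;> simp [signVector, h]
  · rintro ⟨h1, h2⟩
    simp only [paths, mem_image, mem_powersetCard]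
    refine ⟨univ.filter (p · = 1), ⟨subset_univ _, h2⟩, ?_⟩
    funext m
    rcases h1 m with h | h <;> simp [signVector, h]

lemma signVector_injective : Function.Injective (signVector (N := N)) := by
  intro U V h
  ext m
  have := congrFun h m
  by_cases hU : m ∈ U <;> by_cases hV : m ∈ V <;> simp [signVector, hU, hV] at this ⊢

lemma card_paths : #(paths N K) = N.choose K := by
  rw [paths, card_image_of_injective _ signVector_injective, card_powersetCard, card_univ,
    Fintype.card_fin]

variable [NeZero N]

lemma height_signVector (U : Finset (Fin N)) : height (signVector U) N = 2 * #U - N := by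
  have h := Fin.sum_univ_eq_sum_range (fun u => signVector U (u : Fin N)) N
  simp only [Fin.cast_val_eq_self] at h
  have hcompl := card_filter_add_card_filter_not (s := univ) (p := (· ∈ U))
  rw [height, ← h]
  simp only [filter_mem_eq_inter, univ_inter, card_univ, Fintype.card_fin] at hcompl
  simp [signVector, sum_ite]
  omega

lemma rotate_mem_paths {p : Fin N → ℤ} (hp : p ∈ paths N K) (c : Fin N) :
    rotate c p ∈ paths N K := by
  obtain ⟨hsign, hcard⟩ := mem_paths.1 hp
  refine mem_paths.2
    ⟨fun m => hsign (m + c), hcard ▸ card_equiv (Equiv.addRight c) fun m => ?_⟩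
  rw [mem_filter_univ, mem_filter_univ]
  rfl

end Paths

/-- Among paths in 𝒫(n,1,1), for each `1 ≤ i ≤ 2n+1` the number of paths whose
left-most highest vertex is at position `i` is `(1/(2n+1))·C(2n+1,n)`;
in particular this count is independent of `i`. -/
theorem leftmost_highest_point (n : ℕ) (i : ℕ) (hi1 : 1 ≤ i) (hi2 : i ≤ 2*n + 1) :
    Nat.card {p : Fin (2*n+1) → ℤ //
      (∀ m, p m = 1 ∨ p m = -1) ∧
      (univ.filter (fun m => p m = 1)).card = n + 1 ∧
      (∀ m ≤ 2*n + 1, psum p m ≤ psum p i) ∧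
      (∀ m < i, psum p m < psum p i) }
      * (2*n + 1) = Nat.choose (2*n+1) n := by
  classical
  have hi : i ∈ Icc 1 (2 * n + 1) := mem_Icc.2 ⟨hi1, hi2⟩
  have hheight : ∀ p ∈ paths (2 * n + 1) (n + 1), height p (2 * n + 1) = 1 := by
    intro p hp
    obtain ⟨U, hU, rfl⟩ := mem_image.1 hp
    rw [height_signVector, (mem_powersetCard.1 hU).2]
    push_cast; ring
  have hcount := card_eq_mul_card_filter_isLeftmostMax _ (fun p hp => rotate_mem_paths hp)
    hheight hi
  rw [card_paths, Nat.choose_symm_half] at hcount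
  rw [hcount, mul_comm (2 * n + 1)]
  congr 1
  refine Nat.subtype_card _ fun p => ?_
  rw [mem_filter, mem_paths, and_assoc,
    isLeftmostMax_congr (fun m hm => (psum_eq_height p hm).symm) hi2]
  rfl
end
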